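/- Let C ⊆ F_q^N be a linear code of dimension k, and m ≥ 1. Then Σ_{r=0}^{N-k} [m]_r W^{(r)}_{C^⊥}(X,Y) = (1/q^{km}) · Σ_{r=0}^{k} [m]_r W^{(r)}_C(X + (q^m - 1)Y, X - Y), where [m]_r = ∏_{i=0}^{r-1}(q^m - q^i). -/

import Mathlib

open Finset
open scoped Classical BigOperators

variable {Fq : Type} [Field Fq] [Fintype Fq]

noncomputable def wt {N : ℕ} (c : Fin N → Fq) : ℕ := (Finset.univ.filter fun j => c j ≠ 0).card

def dualCode {N : ℕ} (C : Submodule Fq (Fin N → Fq)) : Submodule Fq (Fin N → Fq) where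
  carrier := {v | ∀ u ∈ C, ∑ j, u j * v j = 0}
  add_mem' := by
    intro a b ha hb u hu
    have h1 := ha u hu
    have h2 := hb u hu
    have : ∀ j, u j * (a + b) j = u j * a j + u j * b j := fun j => by
      simp [Pi.add_apply, mul_add]
    simp only [Set.mem_setOf_eq, this, Finset.sum_add_distrib, h1, h2, add_zero]
  zero_mem' := by intro u hu; simp
  smul_mem' := by
    intro r v hv u hu
    have h := hv u hu
    have : ∀ j, u j * (r • v) j = r * (u j * v j) := fun j => by
      simp [Pi.smul_apply, smul_eq_mul]; ring
    simp only [Set.mem_setOf_eq, this, ← Finset.mul_sum, h, mul_zero]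

noncomputable def W {N : ℕ} (C : Submodule Fq (Fin N → Fq)) (X Y : ℂ) : ℂ :=
  ∑ c : C, X ^ (N - wt (c : Fin N → Fq)) * Y ^ wt (c : Fin N → Fq)

noncomputable def effLen {N m : ℕ} (c : Fin m → Fin N → Fq) : ℕ :=
  (Finset.univ.filter fun j => ∃ i, c i j ≠ 0).card

noncomputable def Wm {N m : ℕ} (Cs : Fin m → Submodule Fq (Fin N → Fq)) (X Y : ℂ) : ℂ :=
  ∑ c : (Π i, Cs i), X ^ (N - effLen fun i => (c i : Fin N → Fq)) *
    Y ^ effLen (fun i => (c i : Fin N → Fq))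

noncomputable def suppWt {N : ℕ} (V : Submodule Fq (Fin N → Fq)) : ℕ :=
  (Finset.univ.filter fun j => ∃ v ∈ V, v j ≠ 0).card

noncomputable def Wr {N : ℕ} (C : Submodule Fq (Fin N → Fq)) (r : ℕ) (X Y : ℂ) : ℂ :=
  ∑ᶠ D ∈ {D : Submodule Fq (Fin N → Fq) | D ≤ C ∧ Module.finrank Fq D = r},
    X ^ (N - suppWt D) * Y ^ suppWt D


/-! Both sides regroup the weight enumerator `Wm` of `m`-tuples of codewords, in which a coordinate
counts as nonzero when some member of the tuple is nonzero there.

An `m`-tuple of vectors of `C` spans a subcode `D`, and its effective support is the support of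
`D`. Coordinates in a basis identify the `m`-tuples spanning an `r`-dimensional `D` with the
`r × m` matrices of full row rank, of which there are `[m]_r`; hence
`Σ_r [m]_r W^{(r)}_C = Wm (C, …, C)`.

For `m`-tuples, MacWilliams duality holds over the alphabet `F_q^m`. Fix a nontrivial additive
character `ψ` and sum `(∏_j weight of column j of d) · ψ ⟨c, d⟩` over `c ∈ C^m` and all `d`.
Summing over `c` first keeps only `d ∈ (C^⊥)^m`, each with weight `|C|^m`. Summing over `d` first
factors over the columns, and the Fourier transform of the column weight (`X` at `0`, `Y`
elsewhere) on `F_q^m` is `X + (q^m - 1) Y` at `0` and `X - Y` elsewhere. -/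

open Module Submodule

section Counting

variable {K V : Type*} [Field K] [AddCommGroup V] [Module K V]

lemma Matrix.linearIndependent_row_iff_span_col_eq_top {ι κ : Type*} [Fintype ι] [Fintype κ]
    (M : Matrix ι κ K) : LinearIndependent K M.row ↔ span K (Set.range M.col) = ⊤ := by
  rw [linearIndependent_iff_card_eq_finrank_span, Set.finrank, ← Matrix.rank_eq_finrank_span_row,
    Matrix.rank_eq_finrank_span_cols, Submodule.eq_top_iff_finrank_eq,
    Module.finrank_fintype_fun_eq_card, eq_comm]

lemma span_range_comp_linearEquiv_eq_top_iff {W ι : Type*} [AddCommGroup W] [Module K W]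
    (e : V ≃ₗ[K] W) (c : ι → V) :
    span K (Set.range (e ∘ c)) = ⊤ ↔ span K (Set.range c) = ⊤ := by
  rw [Set.range_comp, Submodule.span_image_linearEquiv, Submodule.map_eq_top_iff]

variable [Fintype K] [Finite V]

lemma card_linearIndependent_eq_prod (R : Type*) [CommRing R] (k : ℕ) :
    (Nat.card {s : Fin k → V // LinearIndependent K s} : R)
      = ∏ i ∈ range k, ((Fintype.card K : R) ^ finrank K V - (Fintype.card K : R) ^ i) := by
  rcases le_or_gt k (finrank K V) with hk | hk
  · rw [card_linearIndependent hk, Fin.prod_univ_eq_prod_range (fun i => _ ^ _ - _ ^ i),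
      Nat.cast_prod]
    refine prod_congr rfl fun i hi => ?_
    rw [Nat.cast_sub (Nat.pow_le_pow_right Fintype.card_pos ((mem_range.mp hi).le.trans hk))]
    push_cast
    rfl
  · have : IsEmpty {s : Fin k → V // LinearIndependent K s} :=
      ⟨fun s => by simpa using (s.2.fintype_card_le_finrank.trans_lt hk).ne⟩
    rw [Nat.card_of_isEmpty, Nat.cast_zero, prod_eq_zero (mem_range.mpr hk) (sub_self _)]

lemma card_span_range_eq_top (R : Type*) [CommRing R] (m : ℕ) :
    (Nat.card {c : Fin m → V // span K (Set.range c) = ⊤} : R)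
      = ∏ i ∈ range (finrank K V), ((Fintype.card K : R) ^ m - (Fintype.card K : R) ^ i) := by
  let b := Module.finBasis K V
  let coords : (Fin m → V) ≃ Matrix (Fin (finrank K V)) (Fin m) K :=
    (Equiv.piCongrRight fun _ => b.equivFun.toEquiv).trans (Equiv.piComm _)
  have e : {c : Fin m → V // span K (Set.range c) = ⊤}
      ≃ {s : Fin (finrank K V) → Fin m → K // LinearIndependent K s} :=
    coords.subtypeEquiv fun c =>
      (span_range_comp_linearEquiv_eq_top_iff b.equivFun c).symm.trans
        (Matrix.linearIndependent_row_iff_span_col_eq_top (coords c)).symm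
  rw [Nat.card_congr e, card_linearIndependent_eq_prod, Module.finrank_fin_fun]

end Counting

section Grouping

variable {K V : Type*} [Field K] [AddCommGroup V] [Module K V]

lemma span_range_coe_eq_iff {D : Submodule K V} {ι : Type*} (c : ι → D) :
    span K (Set.range fun i => (c i : V)) = D ↔ span K (Set.range c) = ⊤ := by
  have span_coe : span K (Set.range fun i => (c i : V)) = (span K (Set.range c)).map D.subtype := by
    rw [Submodule.map_span, ← Set.range_comp]
    rfl
  rw [span_coe, ← (Submodule.map_injective_of_injective D.injective_subtype).eq_iff,
    Submodule.map_subtype_top]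

def spanEqEquivOfLE {D E : Submodule K V} (hDE : D ≤ E) (ι : Type*) :
    {c : ι → E // span K (Set.range fun i => (c i : V)) = D}
      ≃ {c : ι → D // span K (Set.range c) = ⊤} where
  toFun c := ⟨fun i => ⟨c.1 i, c.2.le (subset_span ⟨i, rfl⟩)⟩, (span_range_coe_eq_iff _).mp c.2⟩
  invFun c := ⟨fun i => ⟨c.1 i, hDE (c.1 i).2⟩, (span_range_coe_eq_iff c.1).mpr c.2⟩
  left_inv _ := rfl
  right_inv _ := rfl

noncomputable instance Submodule.fintypeOfFinite [Finite V] : Fintype (Submodule K V) :=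
  Fintype.ofFinite _

variable [Fintype K] [Fintype V]

lemma sum_pi_eq_sum_submodule {R : Type*} [CommRing R] (E : Submodule K V) (m : ℕ)
    (G : Submodule K V → R) :
    ∑ c : Fin m → E, G (span K (Set.range fun i => (c i : V)))
      = ∑ D with D ≤ E,
          (∏ i ∈ range (finrank K D), ((Fintype.card K : R) ^ m - (Fintype.card K : R) ^ i))
            * G D := by
  have maps_to : ∀ c ∈ (univ : Finset (Fin m → E)),
      span K (Set.range fun i => (c i : V)) ∈ ({D | D ≤ E} : Finset (Submodule K V)) := by
    intro c _
    simp [Submodule.span_le, Set.range_subset_iff]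
  rw [← sum_fiberwise_of_maps_to maps_to]
  refine sum_congr rfl fun D hD => ?_
  rw [sum_congr rfl fun c hc => by rw [(mem_filter.mp hc).2], sum_const, nsmul_eq_mul,
    ← Fintype.card_subtype, ← Nat.card_eq_fintype_card,
    Nat.card_congr (spanEqEquivOfLE (mem_filter.mp hD).2 _), card_span_range_eq_top]

end Grouping

lemma effLen_eq_suppWt_span {N m : ℕ} (c : Fin m → Fin N → Fq) :
    effLen c = suppWt (span Fq (Set.range c)) := by
  unfold effLen suppWt
  congr 1
  refine filter_congr fun j _ => ⟨fun ⟨i, hi⟩ => ⟨c i, subset_span ⟨i, rfl⟩, hi⟩, ?_⟩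
  rintro ⟨v, hv, hvj⟩
  by_contra! h
  have : span Fq (Set.range c) ≤ LinearMap.ker (LinearMap.proj j) :=
    span_le.mpr (Set.range_subset_iff.mpr h)
  exact hvj (this hv)

lemma Wr_eq_sum {N : ℕ} (E : Submodule Fq (Fin N → Fq)) (r : ℕ) (X Y : ℂ) :
    Wr E r X Y = ∑ D with D ≤ E ∧ finrank Fq D = r, X ^ (N - suppWt D) * Y ^ suppWt D := by
  simp only [Wr, ← finsum_mem_coe_finset, coe_filter, mem_univ, true_and]

lemma Wm_eq_sum_Wr {N m : ℕ} (E : Submodule Fq (Fin N → Fq)) {n : ℕ} (hE : finrank Fq E ≤ n)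
    (X Y : ℂ) :
    Wm (fun _ : Fin m => E) X Y
      = ∑ r ∈ range (n + 1),
          (∏ i ∈ range r, ((Fintype.card Fq : ℂ) ^ m - (Fintype.card Fq : ℂ) ^ i))
            * Wr E r X Y := by
  have maps_to : ∀ D ∈ ({D | D ≤ E} : Finset (Submodule Fq (Fin N → Fq))),
      finrank Fq D ∈ range (n + 1) := fun D hD =>
    mem_range_succ_iff.mpr ((Submodule.finrank_mono (mem_filter.mp hD).2).trans hE)
  simp only [Wm, effLen_eq_suppWt_span]
  rw [sum_pi_eq_sum_submodule E m (fun D => X ^ (N - suppWt D) * Y ^ suppWt D),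
    ← sum_fiberwise_of_maps_to maps_to]
  refine sum_congr rfl fun r _ => ?_
  rw [filter_filter, Wr_eq_sum, mul_sum]
  refine sum_congr rfl fun D hD => ?_
  rw [(mem_filter.mp hD).2.2]

section Characters

variable {K : Type*} [Field K] {ψ : AddChar K ℂ}

lemma AddChar.map_sum_eq_prod {A M ι : Type*} [AddCommMonoid A] [CommMonoid M]
    (χ : AddChar A M) (s : Finset ι) (f : ι → A) : χ (∑ i ∈ s, f i) = ∏ i ∈ s, χ (f i) :=
  map_prod χ.toMonoidHom (fun i => Multiplicative.ofAdd (f i)) s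

lemma sum_addChar_linearMap (hψ : ψ ≠ 1) {M : Type*} [AddCommGroup M] [Module K M]
    [Fintype M] (f : M →ₗ[K] K) :
    ∑ x, ψ (f x) = if f = 0 then (Fintype.card M : ℂ) else 0 := by
  have trivial_iff : ψ.compAddMonoidHom f.toAddMonoidHom = 0 ↔ f = 0 := by
    refine ⟨fun h => ?_, fun h => by ext; simp [h]⟩
    by_contra hf
    obtain ⟨x, hx⟩ : ∃ x, f x ≠ 0 := by simpa [LinearMap.ext_iff] using hf
    obtain ⟨a, ha⟩ := AddChar.ne_one_iff.mp hψ
    exact ha (by simpa [hx] using DFunLike.congr_fun h ((a / f x) • x))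
  exact (AddChar.sum_eq_ite _).trans (if_congr trivial_iff rfl rfl)

variable [Fintype K]

lemma sum_addChar_dotProduct (hψ : ψ ≠ 1) {ι : Type*} [Fintype ι] [DecidableEq ι]
    (b : ι → K) :
    ∑ a : ι → K, ψ (b ⬝ᵥ a) = if b = 0 then (Fintype.card K : ℂ) ^ Fintype.card ι else 0 := by
  refine (sum_addChar_linearMap hψ (dotProductEquiv K ι b)).trans (if_congr ?_ ?_ rfl)
  · exact (dotProductEquiv K ι).map_eq_zero_iff
  · simp

lemma sum_ite_eq_zero_mul_addChar (hψ : ψ ≠ 1) {ι : Type*} [Fintype ι] [DecidableEq ι]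
    (b : ι → K) (X Y : ℂ) :
    ∑ a : ι → K, (if a = 0 then X else Y) * ψ (b ⬝ᵥ a)
      = if b = 0 then X + ((Fintype.card K : ℂ) ^ Fintype.card ι - 1) * Y else X - Y := by
  have split : ∀ a : ι → K, (if a = 0 then X else Y) * ψ (b ⬝ᵥ a)
      = (if a = 0 then X - Y else 0) + Y * ψ (b ⬝ᵥ a) := by
    intro a
    by_cases ha : a = 0 <;> simp [ha]
  simp only [split, sum_add_distrib, sum_ite_eq', mem_univ, if_true, ← mul_sum,
    sum_addChar_dotProduct hψ]
  split_ifs <;> ring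

lemma sum_prod_ite_forall_mul_addChar (hψ : ψ ≠ 1) {ι κ : Type*} [Fintype ι] [DecidableEq ι]
    [Fintype κ] [DecidableEq κ] (c : ι → κ → K) (X Y : ℂ) :
    ∑ d : ι → κ → K, (∏ j, if ∀ i, d i j = 0 then X else Y) * ψ (∑ i, c i ⬝ᵥ d i)
      = ∏ j, if ∀ i, c i j = 0
          then X + ((Fintype.card K : ℂ) ^ Fintype.card ι - 1) * Y else X - Y := by
  have by_columns : ∀ e : κ → ι → K,
      (∏ j, if ∀ i, e j i = 0 then X else Y) * ψ (∑ i, c i ⬝ᵥ fun j => e j i)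
        = ∏ j, (if e j = 0 then X else Y) * ψ ((fun i => c i j) ⬝ᵥ e j) := by
    intro e
    rw [prod_mul_distrib, ← AddChar.map_sum_eq_prod]
    simp only [dotProduct, funext_iff, Pi.zero_apply]
    rw [sum_comm]
  calc _ = ∑ e : κ → ι → K, ∏ j, (if e j = 0 then X else Y) * ψ ((fun i => c i j) ⬝ᵥ e j) :=
        Fintype.sum_equiv (Equiv.piComm fun _ _ => K) _ _ fun d => by_columns _
    _ = ∏ j, ∑ a : ι → K, (if a = 0 then X else Y) * ψ ((fun i => c i j) ⬝ᵥ a) := by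
        rw [Fintype.prod_sum]
    _ = _ := by
      simp only [sum_ite_eq_zero_mul_addChar hψ]
      simp only [funext_iff, Pi.zero_apply]

end Characters

lemma mem_dualCode {K : Type} [Field K] {N : ℕ} {C : Submodule K (Fin N → K)} {v : Fin N → K} :
    v ∈ dualCode C ↔ ∀ u ∈ C, u ⬝ᵥ v = 0 := Iff.rfl

lemma dualCode_eq_comap_dualAnnihilator {K : Type} [Field K] {N : ℕ}
    (C : Submodule K (Fin N → K)) :
    dualCode C = C.dualAnnihilator.comap (dotProductEquiv K (Fin N)).toLinearMap := by
  ext v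
  simp [mem_dualCode, Submodule.mem_dualAnnihilator, dotProduct_comm v]

lemma finrank_dualCode {K : Type} [Field K] {N : ℕ} (C : Submodule K (Fin N → K)) :
    finrank K (dualCode C) = N - finrank K C := by
  have := Subspace.finrank_add_finrank_dualAnnihilator_eq C
  rw [Module.finrank_fin_fun] at this
  rw [dualCode_eq_comap_dualAnnihilator, Submodule.comap_equiv_eq_map_symm,
    LinearEquiv.finrank_map_eq]
  omega

lemma sum_addChar_dotProduct_submodule {ψ : AddChar Fq ℂ} (hψ : ψ ≠ 1) {N : ℕ}
    (E : Submodule Fq (Fin N → Fq)) (v : Fin N → Fq) :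
    ∑ u : E, ψ ((u : Fin N → Fq) ⬝ᵥ v) = if v ∈ dualCode E then (Fintype.card E : ℂ) else 0 :=
  (sum_addChar_linearMap hψ (((dotProductBilin Fq Fq).flip v).domRestrict E)).trans
    (if_congr (by simp [LinearMap.ext_iff, mem_dualCode]) rfl rfl)

lemma sum_pi_submodule_addChar {ψ : AddChar Fq ℂ} (hψ : ψ ≠ 1) {N : ℕ} {ι : Type*}
    [Fintype ι] [DecidableEq ι] (E : Submodule Fq (Fin N → Fq)) (d : ι → Fin N → Fq) :
    ∑ c : ι → E, ψ (∑ i, (c i : Fin N → Fq) ⬝ᵥ d i)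
      = if ∀ i, d i ∈ dualCode E then (Fintype.card E : ℂ) ^ Fintype.card ι else 0 := by
  simp only [AddChar.map_sum_eq_prod]
  refine (Fintype.prod_sum fun i (u : E) => ψ ((u : Fin N → Fq) ⬝ᵥ d i)).symm.trans ?_
  simp only [sum_addChar_dotProduct_submodule hψ, Fintype.prod_ite_zero, prod_const, card_univ]

lemma sum_pi_subtype {V ι β : Type*} [Fintype ι] [DecidableEq ι] [Fintype V]
    [AddCommMonoid β] (p : V → Prop) (g : (ι → V) → β) :
    ∑ c : ι → Subtype p, g (fun i => c i) = ∑ d with ∀ i, p (d i), g d := by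
  rw [sum_subtype (p := fun d : ι → V => ∀ i, p (d i)) _ (fun d => by simp)]
  exact Fintype.sum_equiv (Equiv.subtypePiEquivPi (p := fun _ => p)).symm _ _ fun c => rfl

lemma prod_ite_forall_eq_pow_effLen {K : Type} [Field K] {N m : ℕ} (c : Fin m → Fin N → K)
    (X Y : ℂ) : ∏ j, (if ∀ i, c i j = 0 then X else Y) = X ^ (N - effLen c) * Y ^ effLen c := by
  have h_effLen : effLen c = #{j | ¬ ∀ i, c i j = 0} := by simp [effLen]
  have h_card : #{j | ∀ i, c i j = 0} + effLen c = N := by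
    rw [h_effLen, card_filter_add_card_filter_not, card_univ, Fintype.card_fin]
  rw [prod_ite, prod_const, prod_const, ← h_effLen, Nat.eq_sub_of_add_eq h_card]

lemma Wm_eq_sum_prod {N m : ℕ} (Cs : Fin m → Submodule Fq (Fin N → Fq)) (X Y : ℂ) :
    Wm Cs X Y = ∑ c : (Π i, Cs i), ∏ j, if ∀ i, (c i : Fin N → Fq) j = 0 then X else Y := by
  simp only [Wm, prod_ite_forall_eq_pow_effLen]

lemma macWilliams_Wm {N m : ℕ} (C : Submodule Fq (Fin N → Fq)) (X Y : ℂ) :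
    Wm (fun _ : Fin m => dualCode C) X Y
      = ((Fintype.card Fq : ℂ) ^ (finrank Fq C * m))⁻¹ *
          Wm (fun _ : Fin m => C) (X + ((Fintype.card Fq : ℂ) ^ m - 1) * Y) (X - Y) := by
  obtain ⟨ψ, hψ⟩ := AddChar.exists_apply_ne_zero.mpr (one_ne_zero : (1 : Fq) ≠ 0)
  replace hψ : ψ ≠ 1 := fun h => hψ (by simp [h])
  let w : (Fin m → Fin N → Fq) → ℂ := fun d => ∏ j, if ∀ i, d i j = 0 then X else Y
  let S : ℂ := ∑ c : Fin m → C, ∑ d, w d * ψ (∑ i, (c i : Fin N → Fq) ⬝ᵥ d i)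
  have primal_side :
      S = Wm (fun _ : Fin m => C) (X + ((Fintype.card Fq : ℂ) ^ m - 1) * Y) (X - Y) := by
    rw [Wm_eq_sum_prod]
    refine sum_congr rfl fun c _ => ?_
    convert sum_prod_ite_forall_mul_addChar hψ (fun i => (c i : Fin N → Fq)) X Y
    simp
  have dual_side :
      S = (Fintype.card Fq : ℂ) ^ (finrank Fq C * m) * Wm (fun _ : Fin m => dualCode C) X Y := by
    simp only [S]
    rw [sum_comm]
    simp only [← mul_sum, sum_pi_submodule_addChar hψ, mul_ite, mul_zero, ← sum_filter]
    rw [Wm_eq_sum_prod, ← sum_mul, mul_comm, Module.card_eq_pow_finrank (K := Fq),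
      Fintype.card_fin, Nat.cast_pow, ← pow_mul]
    congr 1
    convert (sum_pi_subtype (· ∈ dualCode C) w).symm
  have hq : (Fintype.card Fq : ℂ) ^ (finrank Fq C * m) ≠ 0 :=
    pow_ne_zero _ (Nat.cast_ne_zero.mpr Fintype.card_ne_zero)
  rw [eq_inv_mul_iff_mul_eq₀ hq, ← dual_side, primal_side]

theorem klove_identity_general {N k m : ℕ} (C : Submodule Fq (Fin N → Fq))
    (hC : Module.finrank Fq C = k) (X Y : ℂ) :
    ∑ r ∈ Finset.range (N - k + 1),
        (∏ i ∈ Finset.range r,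
            ((Fintype.card Fq : ℂ) ^ m - (Fintype.card Fq : ℂ) ^ i)) * Wr (dualCode C) r X Y
      = ((Fintype.card Fq : ℂ) ^ (k * m))⁻¹ *
          ∑ r ∈ Finset.range (k + 1),
            (∏ i ∈ Finset.range r,
                ((Fintype.card Fq : ℂ) ^ m - (Fintype.card Fq : ℂ) ^ i)) *
              Wr C r (X + ((Fintype.card Fq : ℂ) ^ m - 1) * Y) (X - Y) := by
  have hdual : finrank Fq (dualCode C) ≤ N - k := by rw [finrank_dualCode, hC]
  rw [← Wm_eq_sum_Wr (m := m) (dualCode C) hdual, ← Wm_eq_sum_Wr C hC.le, ← hC]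
  exact macWilliams_Wm C X Y

theorem klove_identity {N k m : ℕ} (hm : 1 ≤ m) (C : Submodule Fq (Fin N → Fq))
    (hC : Module.finrank Fq C = k) (X Y : ℂ) :
    ∑ r ∈ Finset.range (N - k + 1),
        (∏ i ∈ Finset.range r,
            ((Fintype.card Fq : ℂ) ^ m - (Fintype.card Fq : ℂ) ^ i)) * Wr (dualCode C) r X Y
      = ((Fintype.card Fq : ℂ) ^ (k * m))⁻¹ *
          ∑ r ∈ Finset.range (k + 1),
            (∏ i ∈ Finset.range r,
                ((Fintype.card Fq : ℂ) ^ m - (Fintype.card Fq : ℂ) ^ i)) *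
              Wr C r (X + ((Fintype.card Fq : ℂ) ^ m - 1) * Y) (X - Y) :=
  klove_identity_general C hC X Y
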